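/- arXiv:1109.1994 — 2 statements merged into one kernel-verified Lean document; each statement's English description precedes it below -/
import Mathlib

section
/- Let G be a finite simple graph on vertex set V and let S ⊆ V satisfy C(S) ≥ C(S′) for every S′ ⊆ V (S has maximum cohesion among all vertex subsets), and assume C(S) > 0. Then the subgraph of G induced by S is connected. -/
open Finset
open scoped Classical

/-- The set of triangles of a finite simple graph `G`: 3-element vertex sets
that are pairwise adjacent. -/
noncomputable def triangles {V : Type*} [Fintype V] (G : SimpleGraph V) : Finset (Finset V) :=
  Finset.univ.filter (fun t => t.card = 3 ∧ (t : Set V).Pairwise G.Adj)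

/-- `triIn G S` is the number of triangles of `G` with all three vertices in `S`. -/
noncomputable def triIn {V : Type*} [Fintype V] (G : SimpleGraph V) (S : Finset V) : ℕ :=
  ((triangles G).filter (fun t => t ⊆ S)).card

/-- `triOut G S` is the number of triangles of `G` with exactly two vertices in `S`. -/
noncomputable def triOut {V : Type*} [Fintype V] (G : SimpleGraph V) (S : Finset V) : ℕ :=
  ((triangles G).filter (fun t => (t ∩ S).card = 2)).card

/-- The cohesion of a set of vertices `S` in `G`:
`C(S) = i(S)² / (choose(|S|,3) · (i(S) + o(S)))`, which is `0` when the
denominator vanishes (division by zero in `ℝ`). -/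
noncomputable def cohesion {V : Type*} [Fintype V] (G : SimpleGraph V) (S : Finset V) : ℝ :=
  (triIn G S : ℝ) ^ 2 / ((S.card.choose 3 : ℝ) * ((triIn G S : ℝ) + (triOut G S : ℝ)))

/-
If `S` splits into nonempty parts `A`, `B` with no edge between them, every triangle meeting `S`
lies on one side, so `i` and `o` are additive over the split, while `choose(|S|,3)` strictly
exceeds `choose(|A|,3) + choose(|B|,3)`. With `c(X) = choose(|X|,3)` and `d(X) = i(X) + o(X)`,
the bounds `C(A), C(B) ≤ M` read `i(X)² ≤ M·c(X)·d(X)`, and Cauchy–Schwarz gives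
`(i(A) + i(B))² ≤ M·(c(A) + c(B))·(d(A) + d(B))`. Hence `C(S) < max (C(A), C(B))` whenever
`C(S) > 0`, so a disconnected `S` never has maximum positive cohesion.
-/

theorem Nat.choose_three_add_lt {a b : ℕ} (ha : 1 ≤ a) (hb : 1 ≤ b) (hab : 3 ≤ a + b) :
    a.choose 3 + b.choose 3 < (a + b).choose 3 := by
  have hvdm : (a + b).choose 3
      = a.choose 3 + a.choose 2 * b + a * b.choose 2 + b.choose 3 := by
    rw [Nat.add_choose_eq, Finset.Nat.sum_antidiagonal_eq_sum_range_succ_mk]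
    simp only [Finset.sum_range_succ, Finset.sum_range_zero, Nat.reduceSub,
      Nat.choose_zero_right, Nat.choose_one_right]
    ring
  have hcross : 0 < a.choose 2 * b + a * b.choose 2 := by
    rcases le_or_gt 2 a with h | h
    · have := Nat.choose_pos h; positivity
    · have := Nat.choose_pos (show 2 ≤ b by omega); positivity
  omega

theorem add_sq_le_mul_add_mul_add {M x y a b p q : ℝ} (hM : 0 ≤ M) (ha : 0 ≤ a) (hb : 0 ≤ b)
    (hp : 0 ≤ p) (hq : 0 ≤ q) (hx : x ^ 2 ≤ M * (a * p)) (hy : y ^ 2 ≤ M * (b * q)) :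
    (x + y) ^ 2 ≤ M * ((a + b) * (p + q)) := by
  set u := M * (a * q)
  set v := M * (b * p)
  have hprod : (x * y) ^ 2 ≤ u * v := by
    rw [mul_pow]
    calc x ^ 2 * y ^ 2 ≤ (M * (a * p)) * (M * (b * q)) :=
          mul_le_mul hx hy (sq_nonneg y) ((sq_nonneg x).trans hx)
      _ = u * v := by ring
  -- AM-GM: `2xy ≤ 2√(uv) ≤ u + v`
  have hcross : 2 * (x * y) ≤ u + v :=
    le_of_sq_le_sq (by nlinarith [sq_nonneg (u - v)]) (by positivity)
  calc (x + y) ^ 2 = x ^ 2 + 2 * (x * y) + y ^ 2 := by ring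
    _ ≤ M * (a * p) + (u + v) + M * (b * q) := by linarith
    _ = M * ((a + b) * (p + q)) := by ring

theorem SimpleGraph.exists_separation_of_not_connected_induce {V : Type*} {G : SimpleGraph V}
    {S : Finset V} (hS : S.Nonempty) (hcon : ¬ (G.induce (S : Set V)).Connected) :
    ∃ A ⊆ S, A.Nonempty ∧ (S \ A).Nonempty ∧ ∀ a ∈ A, ∀ b ∈ S \ A, ¬ G.Adj a b := by
  obtain ⟨u₀, hu₀⟩ := hS
  have : Nonempty (S : Set V) := ⟨⟨u₀, hu₀⟩⟩
  obtain ⟨u, v, huv⟩ : ∃ u v : (S : Set V), ¬ (G.induce (S : Set V)).Reachable u v := by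
    by_contra! h
    exact hcon ⟨fun u v => h u v⟩
  set A := S.filter fun x => ∃ hx : x ∈ (S : Set V), (G.induce (S : Set V)).Reachable u ⟨x, hx⟩
  refine ⟨A, filter_subset _ _, ⟨u, ?_⟩, ⟨v, ?_⟩, ?_⟩
  · exact mem_filter.2 ⟨u.2, u.2, .rfl⟩
  · exact mem_sdiff.2 ⟨v.2, fun h => huv (mem_filter.1 h).2.2⟩
  · intro a ha b hb hab
    obtain ⟨-, haS, hua⟩ := mem_filter.1 ha
    obtain ⟨hbS, hbA⟩ := mem_sdiff.1 hb
    have hadj : (G.induce (S : Set V)).Adj ⟨a, haS⟩ ⟨b, hbS⟩ := hab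
    exact hbA (mem_filter.2 ⟨hbS, hbS, hua.trans hadj.reachable⟩)

theorem card_filter_inter_union {α : Type*} [DecidableEq α] {T : Finset (Finset α)}
    {A B : Finset α} (P : Finset α → Finset α → Prop) [∀ t s, Decidable (P t s)]
    (hP : ∀ t ∈ T, ¬ P t ∅) (hT : ∀ t ∈ T, Disjoint t A ∨ Disjoint t B) :
    #(T.filter fun t => P t (t ∩ (A ∪ B)))
      = #(T.filter fun t => P t (t ∩ A)) + #(T.filter fun t => P t (t ∩ B)) := by
  simp only [card_filter, ← sum_add_distrib]
  refine sum_congr rfl fun t ht => ?_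
  rcases hT t ht with h | h <;>
    simp [inter_union_distrib_left, disjoint_iff_inter_eq_empty.1 h, hP t ht]

section Triangles

variable {V : Type*} [Fintype V] {G : SimpleGraph V}

theorem card_of_mem_triangles {t : Finset V} (ht : t ∈ triangles G) : t.card = 3 :=
  (mem_filter.1 ht).2.1

theorem nonempty_of_mem_triangles {t : Finset V} (ht : t ∈ triangles G) : t.Nonempty :=
  card_pos.1 (by rw [card_of_mem_triangles ht]; norm_num)

theorem three_le_card_of_triIn_ne_zero {S : Finset V} (h : triIn G S ≠ 0) : 3 ≤ S.card := by
  obtain ⟨t, ht⟩ := card_ne_zero.1 h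
  obtain ⟨htG, htS⟩ := mem_filter.1 ht
  exact card_of_mem_triangles htG ▸ card_le_card htS

theorem disjoint_or_disjoint_of_mem_triangles {t A B : Finset V} (ht : t ∈ triangles G)
    (hd : Disjoint A B) (hsep : ∀ a ∈ A, ∀ b ∈ B, ¬ G.Adj a b) :
    Disjoint t A ∨ Disjoint t B := by
  by_contra! h
  obtain ⟨a, hat, haA⟩ := not_disjoint_iff.1 h.1
  obtain ⟨b, hbt, hbB⟩ := not_disjoint_iff.1 h.2
  exact hsep a haA b hbB <|
    (mem_filter.1 ht).2.2 (mem_coe.2 hat) (mem_coe.2 hbt) fun h => disjoint_left.1 hd haA (h ▸ hbB)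

theorem triIn_union {A B : Finset V} (hd : Disjoint A B) (hsep : ∀ a ∈ A, ∀ b ∈ B, ¬ G.Adj a b) :
    triIn G (A ∪ B) = triIn G A + triIn G B := by
  simp only [triIn, ← inter_eq_left]
  exact card_filter_inter_union (fun t s => s = t)
    (fun t ht => (nonempty_of_mem_triangles ht).ne_empty.symm)
    (fun t ht => disjoint_or_disjoint_of_mem_triangles ht hd hsep)

theorem triOut_union {A B : Finset V} (hd : Disjoint A B) (hsep : ∀ a ∈ A, ∀ b ∈ B, ¬ G.Adj a b) :
    triOut G (A ∪ B) = triOut G A + triOut G B :=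
  card_filter_inter_union (fun _ s => s.card = 2) (fun _ _ => by simp)
    (fun t ht => disjoint_or_disjoint_of_mem_triangles ht hd hsep)

theorem sq_triIn_le_of_cohesion_le {S : Finset V} {M : ℝ} (hM : 0 ≤ M) (h : cohesion G S ≤ M) :
    (triIn G S : ℝ) ^ 2 ≤ M * ((S.card.choose 3 : ℝ) * (triIn G S + triOut G S)) := by
  rcases eq_or_ne (triIn G S) 0 with h0 | h0
  · rw [h0, Nat.cast_zero, sq, zero_mul]
    positivity
  · have hchoose : 0 < S.card.choose 3 := Nat.choose_pos (three_le_card_of_triIn_ne_zero h0)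
    have hi : 0 < (triIn G S : ℝ) := by exact_mod_cast Nat.pos_of_ne_zero h0
    rwa [cohesion, div_le_iff₀ (by positivity)] at h

theorem sq_triIn_eq_cohesion_mul {S : Finset V} (h : cohesion G S ≠ 0) :
    (triIn G S : ℝ) ^ 2 = cohesion G S * ((S.card.choose 3 : ℝ) * (triIn G S + triOut G S)) := by
  have hden : (S.card.choose 3 : ℝ) * (triIn G S + triOut G S) ≠ 0 := fun h0 =>
    h (by rw [cohesion, h0, div_zero])
  rw [cohesion, div_mul_cancel₀ _ hden]

theorem triIn_ne_zero_of_cohesion_ne_zero {S : Finset V} (h : cohesion G S ≠ 0) :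
    triIn G S ≠ 0 := fun h0 => h (by simp [cohesion, h0])

theorem cohesion_lt_max_of_separated {A B : Finset V} (hA : A.Nonempty) (hB : B.Nonempty)
    (hd : Disjoint A B) (hsep : ∀ a ∈ A, ∀ b ∈ B, ¬ G.Adj a b) (hpos : 0 < cohesion G (A ∪ B)) :
    cohesion G (A ∪ B) < max (cohesion G A) (cohesion G B) := by
  set M := cohesion G (A ∪ B)
  by_contra! hle
  have hAle := sq_triIn_le_of_cohesion_le hpos.le ((le_max_left _ _).trans hle)
  have hBle := sq_triIn_le_of_cohesion_le hpos.le ((le_max_right _ _).trans hle)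
  have hSeq := sq_triIn_eq_cohesion_mul hpos.ne'
  have hiS := triIn_ne_zero_of_cohesion_ne_zero hpos.ne'
  have hcard := card_union_of_disjoint hd
  have hchoose : (A.card.choose 3 + B.card.choose 3 : ℝ) < ((A ∪ B).card.choose 3 : ℝ) := by
    exact_mod_cast hcard ▸ Nat.choose_three_add_lt hA.card_pos hB.card_pos
      (hcard ▸ three_le_card_of_triIn_ne_zero hiS)
  have hmass : (0 : ℝ) < triIn G (A ∪ B) + triOut G (A ∪ B) := by
    have : (0 : ℝ) < triIn G (A ∪ B) := by exact_mod_cast Nat.pos_of_ne_zero hiS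
    positivity
  rw [triIn_union hd hsep, triOut_union hd hsep] at hSeq hmass
  push_cast at hSeq hmass
  have hsum := add_sq_le_mul_add_mul_add hpos.le (Nat.cast_nonneg _) (Nat.cast_nonneg _)
    (by positivity) (by positivity) hAle hBle
  have hlt := mul_lt_mul_of_pos_left (mul_lt_mul_of_pos_right hchoose hmass) hpos
  linarith

end Triangles

theorem maxCohesion_connected {V : Type*} [Fintype V]
    (G : SimpleGraph V) (S : Finset V)
    (hmax : ∀ S' : Finset V, cohesion G S' ≤ cohesion G S)
    (hpos : 0 < cohesion G S) :
    (G.induce (S : Set V)).Connected := by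
  by_contra hcon
  have hS : S.Nonempty := by
    have := three_le_card_of_triIn_ne_zero (triIn_ne_zero_of_cohesion_ne_zero hpos.ne')
    exact card_pos.1 (by omega)
  obtain ⟨A, hAS, hA, hB, hsep⟩ := G.exists_separation_of_not_connected_induce hS hcon
  have hlt := cohesion_lt_max_of_separated hA hB disjoint_sdiff hsep
    (by rwa [union_sdiff_of_subset hAS])
  rw [union_sdiff_of_subset hAS] at hlt
  exact hlt.not_ge (max_le (hmax A) (hmax (S \ A)))
end

section
/- Let G = (V,E) be a finite simple graph with n = |V| ≥ 4, let G′ be the graph obtained from G by the clique-attachment construction, and fix k with 3 ≤ k ≤ n. If G contains a clique of size k, then G′ contains a connected set of vertices S (namely that clique) whose cohesion in G′ satisfies C_{G′}(S) ≥ λ(k) = choose(k,3) / (choose(k,3) + choose(k,2)·(n−k)). -/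
open Finset
open scoped Classical

/-- The clique-attachment construction: for each non-adjacent pair `{u,v}` of
vertices of `G`, add the edge `uv`, attach a fresh clique `K_{u,v}` of `T` new
vertices, and join both `u` and `v` to every vertex of that clique.  The added
cliques for distinct non-adjacent pairs are disjoint.  (Note that after adding
all the missing edges, the original vertex set becomes a clique.) -/
noncomputable def cliqueAttach {V : Type*} [Fintype V] (G : SimpleGraph V) (T : ℕ) :
    SimpleGraph (V ⊕ ({p : Sym2 V // ¬ p.IsDiag ∧ p ∉ G.edgeSet} × Fin T)) where
  Adj x y :=
    match x, y with
    | Sum.inl a, Sum.inl b => a ≠ b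
    | Sum.inl a, Sum.inr (p, _) => a ∈ (p : Sym2 V)
    | Sum.inr (p, _), Sum.inl a => a ∈ (p : Sym2 V)
    | Sum.inr (p, i), Sum.inr (q, j) => p = q ∧ i ≠ j
  symm := ⟨by
    rintro (a | ⟨p, i⟩) (b | ⟨q, j⟩) h <;> simp_all <;> tauto⟩
  loopless := ⟨by
    rintro (a | ⟨p, i⟩) h <;> simp_all⟩

/-!
In `G′` the original vertices form a clique, so any `k`-clique `K` of `G` gives a connected
set `S` with `i(S) = choose(k,3)`, and then `C(S) = choose(k,3) / (choose(k,3) + o(S))`.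
A triangle with exactly two vertices `a, b` in `S` has its third vertex either in `V \ K`,
which gives `choose(k,2) · (n - k)` triangles, or in an attached clique `K_{uv}`; the latter
would force `{a, b} = {u, v}`, impossible since `ab` is an edge of `G`.
So `C(S) = λ(k)` exactly.
-/

section Triangles

open SimpleGraph

variable {V : Type*} {G : SimpleGraph V} {S : Finset V}

theorem connected_induce_of_isClique (hS : G.IsClique (S : Set V)) (hne : S.Nonempty) :
    (G.induce (S : Set V)).Connected := by
  have : Nonempty (S : Set V) := hne.coe_sort
  rw [induce_eq_top.2 hS]
  exact connected_top

variable [Fintype V]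

theorem mem_triangles {t : Finset V} : t ∈ triangles G ↔ G.IsNClique 3 t := by
  rw [triangles, mem_filter, isNClique_iff]
  exact ⟨fun ⟨_, hc, hadj⟩ => ⟨hadj, hc⟩, fun ⟨hadj, hc⟩ => ⟨mem_univ t, hc, hadj⟩⟩

theorem triIn_eq_choose_of_isClique (hS : G.IsClique (S : Set V)) :
    triIn G S = S.card.choose 3 := by
  rw [triIn, ← card_powersetCard]
  congr 1
  ext t
  simp only [mem_filter, mem_triangles, mem_powersetCard, isNClique_iff]
  exact ⟨fun ⟨⟨_, hc⟩, hsub⟩ => ⟨hsub, hc⟩,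
    fun ⟨hsub, hc⟩ => ⟨⟨hS.subset (coe_subset.2 hsub), hc⟩, hsub⟩⟩

/-- The counted triangles are the sets `insert b e` with `b ∈ B` and `e` a pair in `S`. -/
theorem triOut_eq_choose_mul_card_of_isClique (hS : G.IsClique (S : Set V)) {B : Finset V}
    (hBS : Disjoint B S)
    (hjoin : ∀ b ∈ B, ∀ x ∈ S, G.Adj b x)
    (hB : ∀ w ∉ S, ∀ x ∈ S, ∀ y ∈ S, x ≠ y → G.Adj w x → G.Adj w y → w ∈ B) :
    triOut G S = S.card.choose 2 * B.card := by
  have hinter {b : V} {e : Finset V} (hb : b ∈ B) (he : e ⊆ S) : insert b e ∩ S = e := by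
    rw [insert_inter_of_notMem (disjoint_left.1 hBS hb), inter_eq_left.2 he]
  have hsdiff {b : V} {e : Finset V} (hb : b ∈ B) (he : e ⊆ S) : insert b e \ S = {b} := by
    rw [insert_sdiff_of_notMem _ (disjoint_left.1 hBS hb), sdiff_eq_empty_iff_subset.2 he,
      insert_empty]
  rw [triOut, ← card_powersetCard 2 S, ← card_product]
  symm
  refine card_bij (fun eb _ => insert eb.2 eb.1) ?_ ?_ ?_
  · rintro ⟨e, b⟩ heb
    simp only [mem_product, mem_powersetCard] at heb
    obtain ⟨⟨he, he2⟩, hb⟩ := heb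
    refine mem_filter.2 ⟨mem_triangles.2 ?_, by rw [hinter hb he, he2]⟩
    exact ((isNClique_iff G).2 ⟨hS.subset (coe_subset.2 he), he2⟩).insert
      fun x hx => hjoin b hb x (he hx)
  · rintro ⟨e₁, b₁⟩ h₁ ⟨e₂, b₂⟩ h₂ heq
    simp only [mem_product, mem_powersetCard] at h₁ h₂
    have he : e₁ = e₂ := by rw [← hinter h₁.2 h₁.1.1, ← hinter h₂.2 h₂.1.1, heq]
    have hb : ({b₁} : Finset V) = {b₂} := by
      rw [← hsdiff h₁.2 h₁.1.1, ← hsdiff h₂.2 h₂.1.1, heq]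
    rw [he, singleton_inj.1 hb]
  · intro t ht
    obtain ⟨htri, ht2⟩ := mem_filter.1 ht
    obtain ⟨hclique, ht3⟩ := (isNClique_iff G).1 (mem_triangles.1 htri)
    obtain ⟨w, hw⟩ : ∃ w, t \ S = {w} := card_eq_one.1 (by
      have := card_sdiff_add_card_inter t S
      omega)
    obtain ⟨hwt, hwS⟩ := mem_sdiff.1 (hw ▸ mem_singleton_self w)
    obtain ⟨x, y, hxy, hxyeq⟩ := card_eq_two.1 ht2
    have hx : x ∈ t ∩ S := hxyeq ▸ mem_insert_self x {y}
    have hy : y ∈ t ∩ S := hxyeq ▸ mem_insert_of_mem (mem_singleton_self y)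
    have hwB : w ∈ B := by
      rw [mem_inter] at hx hy
      exact hB w hwS x hx.2 y hy.2 hxy
        (hclique hwt hx.1 fun h => hwS (h ▸ hx.2)) (hclique hwt hy.1 fun h => hwS (h ▸ hy.2))
    refine ⟨(t ∩ S, w),
      mem_product.2 ⟨mem_powersetCard.2 ⟨inter_subset_right, ht2⟩, hwB⟩, ?_⟩
    change insert w (t ∩ S) = t
    rw [insert_eq, ← hw, sdiff_union_inter]

theorem cohesion_eq_of_isClique (hS : G.IsClique (S : Set V)) (h3 : 3 ≤ S.card) :
    cohesion G S = (S.card.choose 3 : ℝ) / (S.card.choose 3 + triOut G S) := by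
  have hpos : (0 : ℝ) < S.card.choose 3 := by exact_mod_cast Nat.choose_pos h3
  rw [cohesion, triIn_eq_choose_of_isClique hS, sq, mul_div_mul_left _ _ hpos.ne']

end Triangles

section CliqueAttach

variable {V : Type*} [Fintype V] {G : SimpleGraph V} {T : ℕ}

theorem isClique_range_inl_cliqueAttach : (cliqueAttach G T).IsClique (Set.range Sum.inl) := by
  rintro _ ⟨a, rfl⟩ _ ⟨b, rfl⟩ hab
  exact fun h => hab (congrArg _ h)

/-- A vertex of `K_{uv}` has no neighbours in `V` besides `u` and `v`. -/
theorem not_adj_of_cliqueAttach_adj_inr {q} {a b : V} (hab : a ≠ b)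
    (ha : (cliqueAttach G T).Adj (.inr q) (.inl a))
    (hb : (cliqueAttach G T).Adj (.inr q) (.inl b)) :
    ¬ G.Adj a b := by
  have hq : (q.1 : Sym2 V) = s(a, b) := (Sym2.mem_and_mem_iff hab).1 ⟨ha, hb⟩
  exact fun h => q.1.2.2 (hq ▸ h)

theorem triOut_cliqueAttach_map_inl {K : Finset V} (hK : G.IsClique (K : Set V)) :
    triOut (cliqueAttach G T) (K.map Function.Embedding.inl) =
      K.card.choose 2 * (Fintype.card V - K.card) := by
  rw [triOut_eq_choose_mul_card_of_isClique
    (isClique_range_inl_cliqueAttach.subset (coe_map_subset_range _ K))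
    (B := Kᶜ.map Function.Embedding.inl), card_map, card_map, card_compl]
  · exact (disjoint_map _).2 disjoint_compl_left
  · intro y hy x hx
    obtain ⟨c, hc, rfl⟩ := mem_map.1 hy
    obtain ⟨a, ha, rfl⟩ := mem_map.1 hx
    exact fun hca => mem_compl.1 hc (hca ▸ ha)
  · rintro (c | q) hw _ hx _ hy hxy hwx hwy
    · exact mem_map_of_mem _ (mem_compl.2 fun hc => hw (mem_map_of_mem _ hc))
    · obtain ⟨a, ha, rfl⟩ := mem_map.1 hx
      obtain ⟨b, hb, rfl⟩ := mem_map.1 hy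
      have hab : a ≠ b := fun h => hxy (congrArg _ h)
      exact absurd (hK ha hb hab) (not_adj_of_cliqueAttach_adj_inr hab hwx hwy)

end CliqueAttach

theorem exists_connected_cohesive_of_clique_general {V : Type*} [Fintype V] (G : SimpleGraph V)
    (T : ℕ) (k : ℕ) (h3 : 3 ≤ k)
    (hclique : ∃ K : Finset V, G.IsClique (K : Set V) ∧ K.card = k) :
    ∃ S : Finset (V ⊕ ({p : Sym2 V // ¬ p.IsDiag ∧ p ∉ G.edgeSet} × Fin T)),
      ((cliqueAttach G T).induce (S : Set (V ⊕ ({p : Sym2 V // ¬ p.IsDiag ∧ p ∉ G.edgeSet} × Fin T)))).Connected ∧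
      (Nat.choose k 3 : ℝ) /
          ((Nat.choose k 3 + Nat.choose k 2 * (Fintype.card V - k) : ℕ) : ℝ) ≤
        cohesion (cliqueAttach G T) S := by
  obtain ⟨K, hK, rfl⟩ := hclique
  have hS := (isClique_range_inl_cliqueAttach (G := G) (T := T)).subset
    (coe_map_subset_range .inl K)
  refine ⟨_, connected_induce_of_isClique hS (card_pos.1 (by omega)).map, le_of_eq ?_⟩
  rw [cohesion_eq_of_isClique hS (by rwa [card_map]), triOut_cliqueAttach_map_inl hK, card_map,
    Nat.cast_add]

theorem exists_connected_cohesive_of_clique {V : Type*} [Fintype V] (G : SimpleGraph V)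
    (hn : 4 ≤ Fintype.card V)
    (T : ℕ) (hT : T = 2 * (Nat.choose (Fintype.card V) 3) ^ 4)
    (k : ℕ) (h3 : 3 ≤ k) (hkn : k ≤ Fintype.card V)
    (hclique : ∃ K : Finset V, G.IsClique (K : Set V) ∧ K.card = k) :
    ∃ S : Finset (V ⊕ ({p : Sym2 V // ¬ p.IsDiag ∧ p ∉ G.edgeSet} × Fin T)),
      ((cliqueAttach G T).induce (S : Set (V ⊕ ({p : Sym2 V // ¬ p.IsDiag ∧ p ∉ G.edgeSet} × Fin T)))).Connected ∧
      (Nat.choose k 3 : ℝ) /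
          ((Nat.choose k 3 + Nat.choose k 2 * (Fintype.card V - k) : ℕ) : ℝ) ≤
        cohesion (cliqueAttach G T) S :=
  exists_connected_cohesive_of_clique_general G T k h3 hclique
end
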